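/- arXiv:2506.16862 — 3 statements merged into one kernel-verified Lean document; each statement's English description precedes it below -/
import Mathlib

section
/- Let (Ω, F, P) be a probability space with a filtration (F_l)_{l=0}^T, let (Y_l)_{l=0}^T be an adapted, integrable, bounded real-valued process, and let (U_l)_{l=0}^T be its Snell envelope. Then (U_l) is the smallest supermartingale dominating (Y_l): if (Z_l)_{l=0}^T is any supermartingale with respect to (F_l) satisfying Z_l ≥ Y_l almost surely for all l, then Z_l ≥ U_l almost surely for all l. -/
open MeasureTheory

/-! Backward induction from `T`: for `l < T` both terms of
`U l = max (Y l) (μ[U (l + 1) | ℱ l])` lie below `Z l`, the first by domination and the second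
because conditional expectation is monotone and `Z` is a supermartingale. -/

section SnellRecursion

variable {Ω : Type*} {m m0 : MeasurableSpace Ω} {μ : Measure Ω}

lemma max_condExp_ae_le {f g h z : Ω → ℝ} (hg : Integrable g μ) (hh : Integrable h μ)
    (hgh : g ≤ᵐ[μ] h) (hhz : μ[h | m] ≤ᵐ[μ] z) (hfz : f ≤ᵐ[μ] z) :
    (fun ω => max (f ω) (μ[g | m] ω)) ≤ᵐ[μ] z := by
  filter_upwards [condExp_mono hg hh hgh, hhz, hfz] with ω hgh hhz hfz
  exact max_le hfz (hgh.trans hhz)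

lemma integrable_of_snell_recursion {ℱ : Filtration ℕ m0} {T : ℕ} {Y U : ℕ → Ω → ℝ}
    (hint : ∀ l, l ≤ T → Integrable (Y l) μ) (hUT : U T = Y T)
    (hUrec : ∀ l, l < T → U l = fun ω => max (Y l ω) ((μ[U (l + 1) | ℱ l]) ω))
    {l : ℕ} (hl : l ≤ T) : Integrable (U l) μ := by
  rcases hl.lt_or_eq with hlt | rfl
  · exact hUrec l hlt ▸ (hint l hl).sup integrable_condExp
  · exact hUT ▸ hint l le_rfl

end SnellRecursion

theorem snell_envelope_smallest_dominating_supermartingale_general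
    {Ω : Type*} [m0 : MeasurableSpace Ω] (μ : Measure Ω)
    (ℱ : MeasureTheory.Filtration ℕ m0)
    (T : ℕ) (Y : ℕ → Ω → ℝ)
    (hint : ∀ l, l ≤ T → Integrable (Y l) μ)
    (U : ℕ → Ω → ℝ)
    (hUT : U T = Y T)
    (hUrec : ∀ l, l < T → U l = fun ω => max (Y l ω) ((μ[U (l + 1) | ℱ l]) ω))
    (Z : ℕ → Ω → ℝ)
    (hZint : ∀ l, l ≤ T → Integrable (Z l) μ)
    (hZsuper : ∀ l, l < T → (μ[Z (l + 1) | ℱ l]) ≤ᵐ[μ] Z l)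
    (hZdom : ∀ l, l ≤ T → ∀ᵐ ω ∂μ, Y l ω ≤ Z l ω) :
    ∀ l, l ≤ T → ∀ᵐ ω ∂μ, U l ω ≤ Z l ω := by
  intro l hl
  induction hl using Nat.decreasingInduction with
  | self => simpa only [hUT] using hZdom T le_rfl
  | of_succ k hk ih =>
    rw [hUrec k hk]
    exact max_condExp_ae_le (integrable_of_snell_recursion hint hUT hUrec hk)
      (hZint (k + 1) hk) ih (hZsuper k hk) (hZdom k hk.le)

/-- The Snell envelope is the smallest supermartingale dominating the reward process: if
`Z` is adapted, integrable, satisfies the supermartingale inequality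
`E[Z (l+1) | F l] ≤ Z l` a.s. for `l < T`, and dominates `Y` (`Z l ≥ Y l` a.s. for
`l ≤ T`), then `Z l ≥ U l` a.s. for all `l ≤ T`. -/
theorem snell_envelope_smallest_dominating_supermartingale
    {Ω : Type*} [m0 : MeasurableSpace Ω] (μ : Measure Ω) [IsProbabilityMeasure μ]
    (ℱ : MeasureTheory.Filtration ℕ m0)
    (T : ℕ) (Y : ℕ → Ω → ℝ)
    (hadapted : ∀ l, l ≤ T → StronglyMeasurable[ℱ l] (Y l))
    (hint : ∀ l, l ≤ T → Integrable (Y l) μ)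
    (hbdd : ∃ C, ∀ l ω, |Y l ω| ≤ C)
    (U : ℕ → Ω → ℝ)
    (hUT : U T = Y T)
    (hUrec : ∀ l, l < T → U l = fun ω => max (Y l ω) ((μ[U (l + 1) | ℱ l]) ω))
    (Z : ℕ → Ω → ℝ)
    (hZadapted : ∀ l, l ≤ T → StronglyMeasurable[ℱ l] (Z l))
    (hZint : ∀ l, l ≤ T → Integrable (Z l) μ)
    (hZsuper : ∀ l, l < T → (μ[Z (l + 1) | ℱ l]) ≤ᵐ[μ] Z l)
    (hZdom : ∀ l, l ≤ T → ∀ᵐ ω ∂μ, Y l ω ≤ Z l ω) :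
    ∀ l, l ≤ T → ∀ᵐ ω ∂μ, U l ω ≤ Z l ω :=
  snell_envelope_smallest_dominating_supermartingale_general (m0 := m0) μ ℱ T Y hint U hUT hUrec Z
    hZint hZsuper hZdom
end

section
/- Let (Ω, F, P) be a probability space with a filtration (F_l)_{l=0}^T, let (Y_l)_{l=0}^T be an adapted, integrable, bounded real-valued process, let (U_l)_{l=0}^T be its Snell envelope, and let τ* = min{l : U_l = Y_l}. Then the stopped process (U_{l ∧ τ*})_{l=0}^T is a martingale with respect to (F_l): E[U_{(l+1) ∧ τ*} | F_l] = U_{l ∧ τ*} almost surely for every l < T. -/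
/-!
The increment of the stopped process is
`U ((l+1) ∧ τ) - U (l ∧ τ) = 1_{l < τ} (U (l+1) - U l)`, and `{l < τ}` is `ℱ l`-measurable
because `τ` is a hitting time. Before `τ` the reward lies strictly below the envelope, so the
maximum in the backward recursion is attained by `μ[U (l+1) | ℱ l]`; hence the increment has
zero conditional expectation given `ℱ l`.
-/

open MeasureTheory

section SnellEnvelope

variable {Ω : Type*} {m0 : MeasurableSpace Ω} {μ : Measure Ω} {ℱ : Filtration ℕ m0}

structure IsSnellEnvelope (μ : Measure Ω) (ℱ : Filtration ℕ m0) (T : ℕ) (Y U : ℕ → Ω → ℝ) :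
    Prop where
  terminal : U T = Y T
  backward : ∀ l < T, U l = fun ω => max (Y l ω) (μ[U (l + 1) | ℱ l] ω)

namespace IsSnellEnvelope

variable {T : ℕ} {Y U : ℕ → Ω → ℝ}

theorem stronglyMeasurable (hU : IsSnellEnvelope μ ℱ T Y U)
    (hY : ∀ k ≤ T, StronglyMeasurable[ℱ k] (Y k)) {k : ℕ} (hk : k ≤ T) :
    StronglyMeasurable[ℱ k] (U k) := by
  induction hk using Nat.decreasingInduction with
  | self => exact hU.terminal ▸ hY T le_rfl
  | of_succ k hk _ =>
    rw [hU.backward k hk]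
    exact continuous_max.comp_stronglyMeasurable ((hY k hk.le).prodMk stronglyMeasurable_condExp)

theorem integrable (hU : IsSnellEnvelope μ ℱ T Y U) (hY : ∀ k ≤ T, Integrable (Y k) μ)
    {k : ℕ} (hk : k ≤ T) : Integrable (U k) μ := by
  induction hk using Nat.decreasingInduction with
  | self => exact hU.terminal ▸ hY T le_rfl
  | of_succ k hk _ =>
    rw [hU.backward k hk]
    exact (hY k hk.le).sup integrable_condExp

theorem eq_condExp_of_ne (hU : IsSnellEnvelope μ ℱ T Y U) {l : ℕ} (hl : l < T) {ω : Ω}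
    (hne : U l ω ≠ Y l ω) : U l ω = μ[U (l + 1) | ℱ l] ω := by
  have hmax : U l ω = max (Y l ω) (μ[U (l + 1) | ℱ l] ω) := congrFun (hU.backward l hl) ω
  rcases max_choice (Y l ω) (μ[U (l + 1) | ℱ l] ω) with h | h
  · exact absurd (hmax.trans h) hne
  · exact hmax.trans h

end IsSnellEnvelope

theorem Nat.lt_sInf_iff_of_nonempty {s : Set ℕ} (hs : s.Nonempty) {n : ℕ} :
    n < sInf s ↔ ∀ k ≤ n, k ∉ s := by
  refine ⟨fun h k hk => Nat.notMem_of_lt_sInf (hk.trans_lt h), fun h => ?_⟩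
  by_contra! hle
  exact h _ hle (Nat.sInf_mem hs)

theorem measurableSet_lt_sInf {A : ℕ → Set Ω} (hA_cover : ∀ ω, ∃ k, ω ∈ A k) {n : ℕ}
    (hA : ∀ k ≤ n, MeasurableSet[ℱ k] (A k)) :
    MeasurableSet[ℱ n] {ω | n < sInf {k | ω ∈ A k}} := by
  have hset : {ω | n < sInf {k | ω ∈ A k}} = ⋂ k ∈ Set.Iic n, (A k)ᶜ := by
    ext ω
    simp only [Set.mem_ofPred_eq, Set.mem_iInter, Set.mem_Iic, Set.mem_compl_iff]
    exact Nat.lt_sInf_iff_of_nonempty (hA_cover ω)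
  rw [hset]
  exact .biInter (Set.to_countable _) fun k hk => (ℱ.mono hk _ (hA k hk)).compl

/-- Mathlib's `stoppedProcess`, for a time with values in `ℕ` rather than `WithTop ℕ`. -/
def stoppedProcessNat {β : Type*} (X : ℕ → Ω → β) (τ : Ω → ℕ) (n : ℕ) : Ω → β :=
  fun ω => X (min n (τ ω)) ω

section StoppedProcessNat

variable {E : Type*} [NormedAddCommGroup E] {X : ℕ → Ω → E} {τ : Ω → ℕ}

theorem stoppedProcessNat_zero {β : Type*} (X : ℕ → Ω → β) (τ : Ω → ℕ) :
    stoppedProcessNat X τ 0 = X 0 := by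
  funext ω
  simp only [stoppedProcessNat, Nat.zero_min]

theorem stoppedProcessNat_succ {β : Type*} [AddCommGroup β] (X : ℕ → Ω → β) (τ : Ω → ℕ) (n : ℕ) :
    stoppedProcessNat X τ (n + 1) =
      stoppedProcessNat X τ n + {ω | n < τ ω}.indicator (X (n + 1) - X n) := by
  funext ω
  rcases lt_or_ge n (τ ω) with h | h
  · simp only [stoppedProcessNat, Pi.add_apply,
      Set.indicator_of_mem (show ω ∈ {ω | n < τ ω} from h),
      min_eq_left (show n + 1 ≤ τ ω from h), min_eq_left h.le, Pi.sub_apply, add_sub_cancel]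
  · simp only [stoppedProcessNat, Pi.add_apply,
      Set.indicator_of_notMem (show ω ∉ {ω | n < τ ω} from h.not_gt),
      min_eq_right h, min_eq_right (h.trans n.le_succ), add_zero]

theorem stronglyMeasurable_stoppedProcessNat {n : ℕ}
    (hX : ∀ k ≤ n, StronglyMeasurable[ℱ k] (X k))
    (hτ : ∀ k < n, MeasurableSet[ℱ k] {ω | k < τ ω}) :
    StronglyMeasurable[ℱ n] (stoppedProcessNat X τ n) := by
  induction n with
  | zero => exact (stoppedProcessNat_zero X τ) ▸ hX 0 le_rfl
  | succ n ih =>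
    have hmono : ℱ n ≤ ℱ (n + 1) := ℱ.mono n.le_succ
    rw [stoppedProcessNat_succ]
    refine ((ih (fun k hk => hX k (by omega)) fun k hk => hτ k (by omega)).mono hmono).add ?_
    exact ((hX (n + 1) le_rfl).sub ((hX n n.le_succ).mono hmono)).indicator
      (hmono _ (hτ n n.lt_succ_self))

theorem integrable_stoppedProcessNat {n : ℕ} (hX : ∀ k ≤ n, Integrable (X k) μ)
    (hτ : ∀ k < n, MeasurableSet {ω | k < τ ω}) :
    Integrable (stoppedProcessNat X τ n) μ := by
  induction n with
  | zero => exact (stoppedProcessNat_zero X τ) ▸ hX 0 le_rfl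
  | succ n ih =>
    rw [stoppedProcessNat_succ]
    exact (ih (fun k hk => hX k (by omega)) fun k hk => hτ k (by omega)).add
      (((hX (n + 1) le_rfl).sub (hX n n.le_succ)).indicator (hτ n n.lt_succ_self))

theorem condExp_stoppedProcessNat_succ [NormedSpace ℝ E] [CompleteSpace E]
    [SigmaFiniteFiltration μ ℱ] {l : ℕ}
    (hX_meas : ∀ k ≤ l, StronglyMeasurable[ℱ k] (X k)) (hX_int : ∀ k ≤ l + 1, Integrable (X k) μ)
    (hτ : ∀ k ≤ l, MeasurableSet[ℱ k] {ω | k < τ ω})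
    (hmart : ∀ᵐ ω ∂μ, l < τ ω → μ[X (l + 1) | ℱ l] ω = X l ω) :
    μ[stoppedProcessNat X τ (l + 1) | ℱ l] =ᵐ[μ] stoppedProcessNat X τ l := by
  have hXl : Integrable (X l) μ := hX_int l l.le_succ
  have hincr_int : Integrable (X (l + 1) - X l) μ := (hX_int (l + 1) le_rfl).sub hXl
  have hstop : μ[stoppedProcessNat X τ l | ℱ l] = stoppedProcessNat X τ l :=
    condExp_of_stronglyMeasurable (ℱ.le l)
      (stronglyMeasurable_stoppedProcessNat hX_meas fun k hk => hτ k hk.le)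
      (integrable_stoppedProcessNat (fun k hk => hX_int k (by omega))
        fun k hk => ℱ.le k _ (hτ k hk.le))
  have hincr : μ[X (l + 1) - X l | ℱ l] =ᵐ[μ] μ[X (l + 1) | ℱ l] - X l := by
    simpa only [condExp_of_stronglyMeasurable (ℱ.le l) (hX_meas l le_rfl) hXl] using
      condExp_sub (hX_int (l + 1) le_rfl) hXl (ℱ l)
  have hstopped_incr :
      μ[{ω | l < τ ω}.indicator (X (l + 1) - X l) | ℱ l] =ᵐ[μ] 0 := by
    filter_upwards [condExp_indicator hincr_int (hτ l le_rfl), hincr, hmart]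
      with ω hind hω hmartω
    rw [hind]
    by_cases h : l < τ ω
    · simp [h, hω, hmartω h]
    · simp [h]
  rw [stoppedProcessNat_succ]
  filter_upwards [condExp_add (integrable_stoppedProcessNat (fun k hk => hX_int k (by omega))
      fun k hk => ℱ.le k _ (hτ k hk.le)) (hincr_int.indicator (ℱ.le l _ (hτ l le_rfl))) (ℱ l),
    hstopped_incr] with ω hadd hzero
  simp [hadd, hstop, hzero]

end StoppedProcessNat

end SnellEnvelope

theorem snell_stopped_process_martingale_general
    {Ω : Type*} [m0 : MeasurableSpace Ω] (μ : Measure Ω) [IsProbabilityMeasure μ]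
    (ℱ : MeasureTheory.Filtration ℕ m0)
    (T : ℕ) (Y : ℕ → Ω → ℝ)
    (hadapted : ∀ l, l ≤ T → StronglyMeasurable[ℱ l] (Y l))
    (hint : ∀ l, l ≤ T → Integrable (Y l) μ)
    (U : ℕ → Ω → ℝ)
    (hUT : U T = Y T)
    (hUrec : ∀ l, l < T → U l = fun ω => max (Y l ω) ((μ[U (l + 1) | ℱ l]) ω))
    (τ : Ω → ℕ)
    (hτ : ∀ ω, τ ω = sInf {l : ℕ | U l ω = Y l ω}) :
    ∀ l, l < T →
      (μ[(fun ω => U (min (l + 1) (τ ω)) ω) | ℱ l]) =ᵐ[μ] fun ω => U (min l (τ ω)) ω := by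
  intro l hl
  have hU : IsSnellEnvelope μ ℱ T Y U := ⟨hUT, hUrec⟩
  obtain rfl : τ = fun ω => sInf {k | U k ω = Y k ω} := funext hτ
  have hU_meas : ∀ k ≤ T, StronglyMeasurable[ℱ k] (U k) := fun k hk =>
    hU.stronglyMeasurable hadapted hk
  have hτ_meas : ∀ k ≤ l, MeasurableSet[ℱ k] {ω | k < sInf {j | U j ω = Y j ω}} := fun k hk =>
    measurableSet_lt_sInf (A := fun j => {ω | U j ω = Y j ω}) (fun ω => ⟨T, congrFun hUT ω⟩)
      fun j hj => (hU_meas j (by omega)).measurableSet_eq_fun (hadapted j (by omega))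
  exact condExp_stoppedProcessNat_succ (fun k hk => hU_meas k (by omega))
    (fun k hk => hU.integrable hint (by omega)) hτ_meas
    (ae_of_all _ fun ω hω => (hU.eq_condExp_of_ne hl (Nat.notMem_of_lt_sInf hω)).symm)

/-- The Snell envelope stopped at `τ* = min {l : U l = Y l}` is a martingale:
`E[U ((l+1) ∧ τ*) | F l] = U (l ∧ τ*)` a.s. for every `l < T`. -/
theorem snell_stopped_process_martingale
    {Ω : Type*} [m0 : MeasurableSpace Ω] (μ : Measure Ω) [IsProbabilityMeasure μ]
    (ℱ : MeasureTheory.Filtration ℕ m0)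
    (T : ℕ) (Y : ℕ → Ω → ℝ)
    (hadapted : ∀ l, l ≤ T → StronglyMeasurable[ℱ l] (Y l))
    (hint : ∀ l, l ≤ T → Integrable (Y l) μ)
    (hbdd : ∃ C, ∀ l ω, |Y l ω| ≤ C)
    (U : ℕ → Ω → ℝ)
    (hUT : U T = Y T)
    (hUrec : ∀ l, l < T → U l = fun ω => max (Y l ω) ((μ[U (l + 1) | ℱ l]) ω))
    (τ : Ω → ℕ)
    (hτ : ∀ ω, τ ω = sInf {l : ℕ | U l ω = Y l ω}) :
    ∀ l, l < T →
      (μ[(fun ω => U (min (l + 1) (τ ω)) ω) | ℱ l]) =ᵐ[μ] fun ω => U (min l (τ ω)) ω :=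
  snell_stopped_process_martingale_general (m0 := m0) μ ℱ T Y hadapted hint U hUT hUrec τ hτ
end

section
/- Let (Ω, F, P) be a probability space with a filtration (F_l)_{l=0}^T, let (Y_l)_{l=0}^T be an adapted, integrable, bounded real-valued process, let (U_l)_{l=0}^T be its Snell envelope, and let τ* = min{l : U_l = Y_l}. Then τ* is an optimal stopping time: E[Y_{τ*}] = E[U₀] = sup{E[Y_τ] : τ a stopping time with values in {0, …, T}}. -/
open MeasureTheory

/-- Optimality of `τ* = min {l : U l = Y l}`: its expected reward equals `E[U 0]`, and this
value is the maximum of `E[Y σ]` over all stopping times `σ` with values in `{0, …, T}`. -/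
theorem snell_first_hitting_is_optimal
    {Ω : Type*} [m0 : MeasurableSpace Ω] (μ : Measure Ω) [IsProbabilityMeasure μ]
    (ℱ : MeasureTheory.Filtration ℕ m0)
    (T : ℕ) (Y : ℕ → Ω → ℝ)
    (hadapted : ∀ l, l ≤ T → StronglyMeasurable[ℱ l] (Y l))
    (hint : ∀ l, l ≤ T → Integrable (Y l) μ)
    (hbdd : ∃ C, ∀ l ω, |Y l ω| ≤ C)
    (U : ℕ → Ω → ℝ)
    (hUT : U T = Y T)
    (hUrec : ∀ l, l < T → U l = fun ω => max (Y l ω) ((μ[U (l + 1) | ℱ l]) ω))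
    (τ : Ω → ℕ)
    (hτ : ∀ ω, τ ω = sInf {l : ℕ | U l ω = Y l ω}) :
    (∫ ω, Y (τ ω) ω ∂μ = ∫ ω, U 0 ω ∂μ) ∧
    IsGreatest
      {r : ℝ | ∃ σ : Ω → ℕ, IsStoppingTime ℱ (fun ω => (σ ω : WithTop ℕ)) ∧ (∀ ω, σ ω ≤ T) ∧
        r = ∫ ω, Y (σ ω) ω ∂μ}
      (∫ ω, Y (τ ω) ω ∂μ) := by
  classical
  -- measurability and integrability of the Snell envelope, by downward induction
  have hUdown : ∀ d l, l + d = T → StronglyMeasurable[ℱ l] (U l) ∧ Integrable (U l) μ := by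
    intro d
    induction d with
    | zero =>
      intro l hl
      have : l = T := by omega
      subst this
      rw [hUT]
      exact ⟨hadapted _ le_rfl, hint _ le_rfl⟩
    | succ d ih =>
      intro l hl
      have hlT : l < T := by omega
      rw [hUrec l hlT]
      refine ⟨?_, ?_⟩
      · exact ((hadapted l hlT.le).measurable.max
          stronglyMeasurable_condExp.measurable).stronglyMeasurable
      · have h1 : Integrable (fun ω => max (Y l ω) ((μ[U (l + 1)|ℱ l]) ω)) μ := by
          have := (hint l hlT.le).sup (integrable_condExp (f := U (l+1)) (m := ℱ l))
          exact this
        exact h1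
  have hUmeas : ∀ l, l ≤ T → StronglyMeasurable[ℱ l] (U l) :=
    fun l hl => (hUdown (T - l) l (by omega)).1
  have hUint : ∀ l, l ≤ T → Integrable (U l) μ :=
    fun l hl => (hUdown (T - l) l (by omega)).2
  -- the globally-defined process V
  set V : ℕ → Ω → ℝ := fun n => U (min n T) with hV
  have hVadp : StronglyAdapted ℱ V := fun n =>
    (hUmeas (min n T) (min_le_right _ _)).mono (ℱ.mono (min_le_left n T))
  have hVint : ∀ n, Integrable (V n) μ := fun n => hUint _ (min_le_right n T)
  have hVsuper : Supermartingale V ℱ μ := by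
    refine supermartingale_nat hVadp hVint fun n => ?_
    by_cases hn : n < T
    · have h1 : min (n + 1) T = n + 1 := by omega
      have h2 : min n T = n := by omega
      show μ[U (min (n + 1) T)|ℱ n] ≤ᵐ[μ] U (min n T)
      rw [h1, h2, hUrec n hn]
      exact Filter.Eventually.of_forall fun ω => le_max_right _ _
    · have h1 : min (n + 1) T = T := by omega
      have h2 : min n T = T := by omega
      show μ[U (min (n + 1) T)|ℱ n] ≤ᵐ[μ] U (min n T)
      rw [h1, h2]
      have heq := condExp_of_stronglyMeasurable (ℱ.le n)
        ((hUmeas T le_rfl).mono (ℱ.mono (by omega))) (hUint T le_rfl)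
      rw [heq]
  -- basic facts about τ
  have hmem : ∀ ω, U (τ ω) ω = Y (τ ω) ω := fun ω => by
    rw [hτ ω]; exact Nat.sInf_mem (s := {l : ℕ | U l ω = Y l ω}) ⟨T, congrFun hUT ω⟩
  have hτT : ∀ ω, τ ω ≤ T := fun ω => by
    rw [hτ ω]; exact Nat.sInf_le (congrFun hUT ω)
  have hτne : ∀ ω l, l < τ ω → U l ω ≠ Y l ω := fun ω l hl => by
    rw [hτ ω] at hl; exact Nat.notMem_of_lt_sInf hl
  have hτstop : IsStoppingTime ℱ (fun ω => (τ ω : WithTop ℕ)) := by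
    intro n
    simp only [Nat.cast_le, ENat.some_eq_natCast]
    have hset : {ω | τ ω ≤ n} = ⋃ k ∈ Finset.range (min n T + 1), {ω | U k ω = Y k ω} := by
      ext ω
      simp only [Set.mem_setOf_eq, Set.mem_iUnion, Finset.mem_range]
      constructor
      · intro h
        exact ⟨τ ω, by have := hτT ω; omega, hmem ω⟩
      · rintro ⟨k, hk, hU⟩
        have : τ ω ≤ k := by rw [hτ ω]; exact Nat.sInf_le hU
        omega
    rw [hset]
    refine Finset.measurableSet_biUnion _ fun k hk => ?_
    simp only [Finset.mem_range] at hk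
    have hkT : k ≤ T := by omega
    have hkn : k ≤ n := by omega
    exact ℱ.mono hkn _
      (measurableSet_eq_fun (hUmeas k hkT).measurable (hadapted k hkT).measurable)
  have hsvint : ∀ (σ : Ω → ℕ), IsStoppingTime ℱ (fun ω => (σ ω : WithTop ℕ)) → (∀ ω, σ ω ≤ T) →
      Integrable (stoppedValue V (fun ω => (σ ω : WithTop ℕ))) μ :=
    fun σ hσ hσT => integrable_stoppedValue ℕ hσ hVint (fun ω => WithTop.coe_le_coe.mpr (hσT ω))
  -- the martingale property of V stopped at τ
  have key : ∀ l, l ≤ T →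
      ∫ ω, stoppedValue V (fun ω => ((min (τ ω) l : ℕ) : WithTop ℕ)) ω ∂μ = ∫ ω, U 0 ω ∂μ := by
    intro l
    induction l with
    | zero =>
      intro _
      have h0 : (fun ω : Ω => ((min (τ ω) 0 : ℕ) : WithTop ℕ)) = fun _ => ((0 : ℕ) : WithTop ℕ) := by
        funext ω; simp
      rw [h0]
      have : stoppedValue V (fun _ : Ω => ((0 : ℕ) : WithTop ℕ)) = U 0 := by
        funext ω
        show U (min 0 T) ω = U 0 ω
        rw [Nat.zero_min]
      rw [this]
    | succ n ih =>
      intro hn1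
      have hnT : n < T := hn1
      have ihn := ih hnT.le
      set A : Set Ω := {ω | n < τ ω} with hA
      have hAc : A = {ω | τ ω ≤ n}ᶜ := by
        ext ω; simp [hA, Set.mem_compl_iff, not_le]
      have hAmeas : MeasurableSet[ℱ n] A := by
        rw [hAc]; simpa only [Nat.cast_le, ENat.some_eq_natCast] using (hτstop n).compl
      have hdiff : stoppedValue V (fun ω => ((min (τ ω) (n + 1) : ℕ) : WithTop ℕ)) = fun ω =>
          stoppedValue V (fun ω => ((min (τ ω) n : ℕ) : WithTop ℕ)) ω
            + A.indicator (fun ω => U (n + 1) ω - U n ω) ω := by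
        funext ω
        by_cases h : n < τ ω
        · have h1 : min (τ ω) (n + 1) = n + 1 := by omega
          have h2 : min (τ ω) n = n := by omega
          have hmemA : ω ∈ A := h
          show V (min (τ ω) (n + 1)) ω = V (min (τ ω) n) ω + _
          rw [h1, h2, Set.indicator_of_mem hmemA]
          show U (min (n + 1) T) ω = U (min n T) ω + (U (n + 1) ω - U n ω)
          rw [min_eq_left hn1, min_eq_left hnT.le]
          ring
        · have hle : τ ω ≤ n := by omega
          have h1 : min (τ ω) (n + 1) = τ ω := by omega
          have h2 : min (τ ω) n = τ ω := by omega
          have hmemA : ω ∉ A := h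
          show V (min (τ ω) (n + 1)) ω = V (min (τ ω) n) ω + _
          rw [h1, h2, Set.indicator_of_notMem hmemA, add_zero]
      have hstopn : IsStoppingTime ℱ fun ω => ((min (τ ω) n : ℕ) : WithTop ℕ) := by
        intro i
        have h := hτstop.min_const n i
        convert h using 2
        ext ω; simp [ENat.some_eq_natCast]
      have hstopn_le : ∀ ω, min (τ ω) n ≤ T := fun ω => le_trans (min_le_left _ _) (hτT ω)
      have hindint : Integrable (fun ω => A.indicator (fun ω => U (n + 1) ω - U n ω) ω) μ := by
        have : Integrable (fun ω => U (n + 1) ω - U n ω) μ := (hUint _ hn1).sub (hUint _ hnT.le)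
        simpa using this.indicator (ℱ.le n A hAmeas)
      have hzero : ∫ ω, A.indicator (fun ω => U (n + 1) ω - U n ω) ω ∂μ = 0 := by
        rw [integral_indicator (ℱ.le n A hAmeas)]
        have hcongr : Set.EqOn (fun ω => U (n + 1) ω - U n ω)
            (fun ω => U (n + 1) ω - (μ[U (n + 1)|ℱ n]) ω) A := by
          intro ω hω
          have hne := hτne ω n hω
          have hrec := hUrec n hnT
          have hUn : U n ω = max (Y n ω) ((μ[U (n + 1)|ℱ n]) ω) := by
            rw [hrec]
          rcases max_choice (Y n ω) ((μ[U (n + 1)|ℱ n]) ω) with hmax | hmax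
          · exact absurd (hUn.trans hmax) hne
          · simp only
            rw [hUn, hmax]
        rw [setIntegral_congr_fun (ℱ.le n A hAmeas) hcongr,
          integral_sub (hUint _ hn1).integrableOn integrable_condExp.integrableOn,
          setIntegral_condExp (ℱ.le n) (hUint _ hn1) hAmeas, sub_self]
      rw [hdiff, integral_add (hsvint _ hstopn hstopn_le) hindint, hzero, add_zero, ihn]
  -- conclusion for τ
  have hfinal : ∫ ω, Y (τ ω) ω ∂μ = ∫ ω, U 0 ω ∂μ := by
    have hk := key T le_rfl
    have heq : stoppedValue V (fun ω => ((min (τ ω) T : ℕ) : WithTop ℕ)) = fun ω => Y (τ ω) ω := by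
      funext ω
      show V (min (τ ω) T) ω = Y (τ ω) ω
      rw [min_eq_left (hτT ω)]
      show U (min (τ ω) T) ω = Y (τ ω) ω
      rw [min_eq_left (hτT ω)]
      exact hmem ω
    rw [heq] at hk
    exact hk
  refine ⟨hfinal, ⟨τ, hτstop, hτT, rfl⟩, ?_⟩
  rintro r ⟨σ, hσ, hσT, rfl⟩
  rw [hfinal]
  set W : ℕ → Ω → ℝ := fun n => Y (min n T) with hW
  have hWint : ∀ n, Integrable (W n) μ := fun n => hint _ (min_le_right n T)
  have h1 : (fun ω => Y (σ ω) ω) = stoppedValue W (fun ω => (σ ω : WithTop ℕ)) := by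
    funext ω
    show Y (σ ω) ω = Y (min (σ ω) T) ω
    rw [min_eq_left (hσT ω)]
  have hYU : stoppedValue W (fun ω => (σ ω : WithTop ℕ)) ≤ stoppedValue V (fun ω => (σ ω : WithTop ℕ)) := by
    intro ω
    show Y (min (σ ω) T) ω ≤ U (min (σ ω) T) ω
    rw [min_eq_left (hσT ω)]
    rcases lt_or_eq_of_le (hσT ω) with h | h
    · rw [hUrec _ h]; exact le_max_left _ _
    · rw [h, hUT]
  have h2 : ∫ ω, stoppedValue W (fun ω => (σ ω : WithTop ℕ)) ω ∂μ ≤ ∫ ω, stoppedValue V (fun ω => (σ ω : WithTop ℕ)) ω ∂μ :=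
    integral_mono (integrable_stoppedValue ℕ hσ hWint (fun ω => WithTop.coe_le_coe.mpr (hσT ω))) (hsvint σ hσ hσT) hYU
  have h3 : ∫ ω, stoppedValue V (fun ω => (σ ω : WithTop ℕ)) ω ∂μ ≤ ∫ ω, U 0 ω ∂μ := by
    have hmono := (hVsuper.neg).expected_stoppedValue_mono (isStoppingTime_const ℱ 0) hσ
      (fun ω => WithTop.coe_le_coe.mpr (Nat.zero_le _)) (fun ω => WithTop.coe_le_coe.mpr (hσT ω))
    have hneg : ∀ (ρ : Ω → WithTop ℕ), stoppedValue (-V) ρ = -(stoppedValue V ρ) := by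
      intro ρ; funext ω; simp [stoppedValue]
    rw [hneg, hneg] at hmono
    simp only [Pi.neg_apply, integral_neg, neg_le_neg_iff] at hmono
    have hc : stoppedValue V (fun _ : Ω => WithTop.some (0 : ℕ)) = U 0 := by
      funext ω
      show U (min 0 T) ω = U 0 ω
      rw [Nat.zero_min]
    rwa [hc] at hmono
  rw [h1]
  exact le_trans h2 h3
end
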